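/- arXiv:1006.2630 — 3 statements merged into one kernel-verified Lean document; each statement's English description precedes it below -/
import Mathlib

section
/- Let $\mu,\nu$ be positive measures on $\mathbb{R}^d$ satisfying the pivotal condition: for every dyadic cube $I$ and every collection of disjoint subcubes $\{I_\alpha\}$ of $I$, $\sum_\alpha [\mathcal{P}_{I_\alpha}(\chi_{I\setminus I_\alpha}d\mu)]^2\nu(I_\alpha) \le K\mu(I)$. Fix a dyadic cube $\hat I$ and call a subcube $I$ stopping if it is maximal with $[\mathcal{P}_I(\chi_{\hat I\setminus I}d\mu)]^2\nu(I) > 100K\mu(I)$. Then the maximal stopping cubes $\{I_\alpha\}$ inside $\hat I$ satisfy $\sum_\alpha \mu(I_\alpha) \le \frac{1}{2}\mu(\hat I)$. -/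
open MeasureTheory Set
open scoped ENNReal
noncomputable section

/-- Points of `ℝ^d`. -/
abbrev Rd (d : ℕ) := Fin d → ℝ

/-- The half-open axis-parallel cube with lower-left corner `a` and side length `ℓ`. -/
def hcube {d : ℕ} (a : Rd d) (ℓ : ℝ) : Set (Rd d) := {x | ∀ i, a i ≤ x i ∧ x i < a i + ℓ}

/-- The (half-open) dyadic cube `∏ [k_i 2^n, (k_i+1) 2^n)`. -/
def dyC {d : ℕ} (n : ℤ) (k : Fin d → ℤ) : Set (Rd d) :=
  hcube (fun i => (k i : ℝ) * 2 ^ n) ((2 : ℝ) ^ n)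

/-- The pivotal quantity `𝒫_I (χ_S dμ) = ∫_S ℓ(I)^ε / (ℓ(I)+|c(I)-x|)^{d+ε} dμ(x)`,
for the cube `I` with corner `a` and side `ℓ` (center `c(I) = a + ℓ/2`). -/
def pivP {d : ℕ} (ε : ℝ) (μ : Measure (Rd d)) (a : Rd d) (ℓ : ℝ) (S : Set (Rd d)) : ℝ≥0∞ :=
  ∫⁻ x in S, ENNReal.ofReal (ℓ ^ ε / (ℓ + ‖(fun i => a i + ℓ / 2) - x‖) ^ ((d : ℝ) + ε)) ∂μ

/-- The pivotal quantity for the dyadic cube `(n,k)`. -/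
def dpivP {d : ℕ} (ε : ℝ) (μ : Measure (Rd d)) (n : ℤ) (k : Fin d → ℤ) (S : Set (Rd d)) : ℝ≥0∞ :=
  pivP ε μ (fun i => (k i : ℝ) * 2 ^ n) ((2 : ℝ) ^ n) S

/-- The stopping criterion: a dyadic subcube `(n,k)` of `(n̂,k̂)` is stopping when
`𝒫_{I}(χ_{Î∖I} dμ)² ν(I) > 100 K μ(I)`. -/
def IsStopping {d : ℕ} (ε : ℝ) (μ ν : Measure (Rd d)) (K : ℝ≥0∞)
    (nh : ℤ) (kh : Fin d → ℤ) (n : ℤ) (k : Fin d → ℤ) : Prop :=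
  100 * K * μ (dyC n k) < (dpivP ε μ n k (dyC nh kh \ dyC n k)) ^ 2 * ν (dyC n k)

lemma interval_nest {n m : ℤ} (hnm : n ≤ m) {k l : ℤ} {x y : ℝ}
    (hx1 : (k:ℝ)*2^n ≤ x) (hx2 : x < (k:ℝ)*2^n + 2^n)
    (hx3 : (l:ℝ)*2^m ≤ x) (hx4 : x < (l:ℝ)*2^m + 2^m)
    (hy1 : (k:ℝ)*2^n ≤ y) (hy2 : y < (k:ℝ)*2^n + 2^n) :
    (l:ℝ)*2^m ≤ y ∧ y < (l:ℝ)*2^m + 2^m := by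
  set c : ℤ := 2 ^ (m - n).toNat with hc
  have h2n : (0:ℝ) < 2 ^ n := by positivity
  have hcr : (2:ℝ) ^ m = (c:ℝ) * 2 ^ n := by
    rw [hc]
    push_cast
    rw [← zpow_natCast (2:ℝ), Int.toNat_of_nonneg (sub_nonneg.2 hnm),
      ← zpow_add₀ (two_ne_zero) (m - n) n]
    ring_nf
  have hstep1 : l * c ≤ k := by
    have hr : (l:ℝ) * c * 2^n < ((k:ℝ)+1) * 2^n := by
      calc (l:ℝ) * c * 2^n = (l:ℝ) * 2^m := by rw [hcr]; ring
      _ ≤ x := hx3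
      _ < (k:ℝ)*2^n + 2^n := hx2
      _ = ((k:ℝ)+1) * 2^n := by ring
    have := lt_of_mul_lt_mul_right hr h2n.le
    have : ((l*c : ℤ) : ℝ) < ((k+1 : ℤ) : ℝ) := by push_cast; linarith
    have := Int.cast_lt.mp this
    omega
  have hstep2 : k + 1 ≤ (l+1) * c := by
    have hr : (k:ℝ) * 2^n < ((l:ℝ)+1) * c * 2^n := by
      calc (k:ℝ) * 2^n ≤ x := hx1
      _ < (l:ℝ)*2^m + 2^m := hx4
      _ = ((l:ℝ)+1) * c * 2^n := by rw [hcr]; ring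
    have := lt_of_mul_lt_mul_right hr h2n.le
    have : ((k : ℤ) : ℝ) < (((l+1)*c : ℤ) : ℝ) := by push_cast; linarith
    have := Int.cast_lt.mp this
    omega
  constructor
  · calc (l:ℝ)*2^m = (l:ℝ)*c*2^n := by rw [hcr]; ring
    _ ≤ (k:ℝ)*2^n := by
        have : ((l*c : ℤ):ℝ) ≤ ((k:ℤ):ℝ) := Int.cast_le.mpr hstep1
        push_cast at this
        nlinarith
    _ ≤ y := hy1
  · calc y < (k:ℝ)*2^n + 2^n := hy2
    _ = ((k:ℝ)+1)*2^n := by ring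
    _ ≤ ((l:ℝ)+1)*c*2^n := by
        have : (((k+1) : ℤ):ℝ) ≤ (((l+1)*c : ℤ):ℝ) := Int.cast_le.mpr hstep2
        push_cast at this
        nlinarith
    _ = (l:ℝ)*2^m + 2^m := by rw [hcr]; ring

lemma mem_dyC {d : ℕ} {n : ℤ} {k : Fin d → ℤ} {x : Rd d} :
    x ∈ dyC n k ↔ ∀ i, (k i : ℝ) * 2^n ≤ x i ∧ x i < (k i : ℝ) * 2^n + 2^n :=
  Iff.rfl

lemma dyC_nonempty {d : ℕ} (n : ℤ) (k : Fin d → ℤ) : (dyC n k).Nonempty := by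
  refine ⟨fun i => (k i : ℝ) * 2^n, fun i => ⟨le_refl _, ?_⟩⟩
  have : (0:ℝ) < 2^n := by positivity
  linarith

lemma dyC_subset_dyC {d : ℕ} {n m : ℤ} {k l : Fin d → ℤ} (hnm : n ≤ m)
    (h : (dyC n k ∩ dyC m l).Nonempty) : dyC n k ⊆ dyC m l := by
  obtain ⟨x, hxk, hxl⟩ := h
  intro y hy i
  exact interval_nest hnm (hxk i).1 (hxk i).2 (hxl i).1 (hxl i).2 (hy i).1 (hy i).2

lemma dyC_eq_aux {d : ℕ} (hd : 0 < d) {n m : ℤ} {k l : Fin d → ℤ} (hnm : n ≤ m)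
    (h : dyC n k = dyC m l) : n = m ∧ k = l := by
  have h2n : (0:ℝ) < 2^n := by positivity
  have h2m : (0:ℝ) < 2^m := by positivity
  have hcorner : (fun i => (l i:ℝ)*2^m) ∈ dyC m l := fun i => ⟨le_refl _, by linarith⟩
  have hc' : (fun i => (l i:ℝ)*2^m) ∈ dyC n k := h.symm ▸ hcorner
  rcases eq_or_lt_of_le hnm with rfl | hlt
  · refine ⟨rfl, funext fun i => ?_⟩
    obtain ⟨h1, h2⟩ := hc' i
    dsimp only at h1 h2
    have hle : (k i : ℝ) ≤ l i := le_of_mul_le_mul_right h1 h2n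
    have hlt' : (l i : ℝ) < (k i : ℝ) + 1 := by
      have := lt_of_mul_lt_mul_right (by linarith : (l i : ℝ) * 2^n < ((k i : ℝ)+1)*2^n) h2n.le
      exact this
    have h1' : (k i : ℤ) ≤ l i := by exact_mod_cast hle
    have h2' : (l i : ℤ) < k i + 1 := by exact_mod_cast (by push_cast; linarith : ((l i : ℤ):ℝ) < ((k i + 1 : ℤ):ℝ))
    omega
  · exfalso
    set i0 : Fin d := ⟨0, hd⟩
    have h2nm : (2:ℝ)^n < 2^m := zpow_lt_zpow_right₀ one_lt_two hlt
    set y : Rd d := Function.update (fun i => (l i:ℝ)*2^m) i0 ((l i0:ℝ)*2^m + 2^n) with hy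
    have hyml : y ∈ dyC m l := by
      intro i
      dsimp only
      by_cases hi : i = i0
      · subst hi
        rw [hy, Function.update_self]
        constructor <;> linarith
      · rw [hy, Function.update_of_ne hi]
        exact ⟨le_refl _, by linarith⟩
    have hynk : y ∈ dyC n k := h.symm ▸ hyml
    have e1 := (hc' i0).1
    have e2 := (hynk i0).2
    dsimp only at e1 e2
    rw [hy, Function.update_self] at e2
    linarith

lemma dyC_inj {d : ℕ} (hd : 0 < d) {n m : ℤ} {k l : Fin d → ℤ}
    (h : dyC n k = dyC m l) : n = m ∧ k = l := by
  rcases le_total n m with hnm | hmn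
  · exact dyC_eq_aux hd hnm h
  · obtain ⟨h1, h2⟩ := dyC_eq_aux hd hmn h.symm
    exact ⟨h1.symm, h2.symm⟩

/-- If `μ, ν` satisfy the pivotal condition with constant `K`, then for any dyadic cube `Î`
the maximal stopping subcubes `I_α` satisfy `∑_α μ(I_α) ≤ μ(Î)/2`. -/
theorem stmt6 {d : ℕ} (hd : 0 < d) (ε : ℝ) (hε : 0 < ε)
    (μ ν : Measure (Rd d)) (K : ℝ≥0∞)
    (hPiv : ∀ (a : Rd d) (ℓ : ℝ), 0 < ℓ →
      ∀ (ι : Type) (aα : ι → Rd d) (ℓα : ι → ℝ),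
        (∀ i, 0 < ℓα i) →
        (∀ i, hcube (aα i) (ℓα i) ⊆ hcube a ℓ) →
        (Pairwise fun i j => Disjoint (hcube (aα i) (ℓα i)) (hcube (aα j) (ℓα j))) →
        (∑' i, (pivP ε μ (aα i) (ℓα i) (hcube a ℓ \ hcube (aα i) (ℓα i))) ^ 2
            * ν (hcube (aα i) (ℓα i))) ≤ K * μ (hcube a ℓ))
    (nh : ℤ) (kh : Fin d → ℤ)
    (ι : Type) (I : ι → ℤ × (Fin d → ℤ)) (hinj : Function.Injective I)
    (hsub : ∀ i, dyC (I i).1 (I i).2 ⊆ dyC nh kh)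
    (hstop : ∀ i, IsStopping ε μ ν K nh kh (I i).1 (I i).2)
    (hmax : ∀ i, ∀ (m : ℤ) (l : Fin d → ℤ),
      dyC (I i).1 (I i).2 ⊆ dyC m l → dyC m l ⊆ dyC nh kh →
      IsStopping ε μ ν K nh kh m l → dyC m l = dyC (I i).1 (I i).2) :
    ∑' i, μ (dyC (I i).1 (I i).2) ≤ μ (dyC nh kh) / 2 := by
  -- The maximal stopping cubes are pairwise disjoint.
  have hdisj : Pairwise fun i j =>
      Disjoint (dyC (I i).1 (I i).2) (dyC (I j).1 (I j).2) := by
    intro i j hij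
    by_contra hnd
    rw [Set.not_disjoint_iff_nonempty_inter] at hnd
    rcases le_total (I i).1 (I j).1 with hle | hle
    · have hss := dyC_subset_dyC hle hnd
      have heq := hmax i (I j).1 (I j).2 hss (hsub j) (hstop j)
      obtain ⟨h1, h2⟩ := dyC_inj hd heq
      exact hij (hinj (Prod.ext h1 h2)).symm
    · have hss := dyC_subset_dyC hle (by rw [Set.inter_comm] at hnd; exact hnd)
      have heq := hmax j (I i).1 (I i).2 hss (hsub i) (hstop i)
      obtain ⟨h1, h2⟩ := dyC_inj hd heq
      exact hij (hinj (Prod.ext h1 h2))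
  -- Apply the pivotal condition to this family.
  have hP := hPiv (fun i => (kh i : ℝ) * 2 ^ nh) ((2:ℝ) ^ nh) (by positivity)
    ι (fun i => fun j => ((I i).2 j : ℝ) * 2 ^ (I i).1) (fun i => (2:ℝ) ^ (I i).1)
    (fun i => by positivity) hsub hdisj
  have hP' : ∑' i, (dpivP ε μ (I i).1 (I i).2 (dyC nh kh \ dyC (I i).1 (I i).2)) ^ 2
      * ν (dyC (I i).1 (I i).2) ≤ K * μ (dyC nh kh) := hP
  have hsum : (100 * K) * ∑' i, μ (dyC (I i).1 (I i).2) ≤ K * μ (dyC nh kh) := by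
    rw [← ENNReal.tsum_mul_left]
    refine le_trans (ENNReal.tsum_le_tsum fun i => ?_) hP'
    exact (hstop i).le
  rw [ENNReal.le_div_iff_mul_le (Or.inl two_ne_zero) (Or.inl (by norm_num))]
  rcases eq_or_ne K 0 with rfl | hK0
  · have hzero : ∀ i, μ (dyC (I i).1 (I i).2) = 0 := by
      intro i
      exfalso
      have h1 := hstop i
      rw [IsStopping] at h1
      simp only [mul_zero, zero_mul] at h1
      have h2 : (dpivP ε μ (I i).1 (I i).2 (dyC nh kh \ dyC (I i).1 (I i).2)) ^ 2
          * ν (dyC (I i).1 (I i).2) ≤ 0 := by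
        refine le_trans (ENNReal.le_tsum i) (le_trans hP' ?_)
        simp
      exact absurd (lt_of_lt_of_le h1 h2) (lt_irrefl 0)
    rw [ENNReal.tsum_eq_zero.mpr hzero]
    simp
  rcases eq_or_ne K ⊤ with rfl | hKt
  · have hzero : ∀ i, μ (dyC (I i).1 (I i).2) = 0 := by
      intro i
      by_contra hne
      have h1 := hstop i
      rw [IsStopping] at h1
      have : (100 : ℝ≥0∞) * ⊤ * μ (dyC (I i).1 (I i).2) = ⊤ := by
        rw [ENNReal.mul_top (by norm_num), ENNReal.top_mul hne]
      rw [this] at h1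
      exact absurd h1 (not_top_lt)
    rw [ENNReal.tsum_eq_zero.mpr hzero]
    simp
  · -- 0 < K < ∞ : cancel K.
    have hsum' : K * (100 * ∑' i, μ (dyC (I i).1 (I i).2)) ≤ K * μ (dyC nh kh) := by
      rw [← mul_assoc, mul_comm K 100]
      exact hsum
    have h100 : (100 : ℝ≥0∞) * ∑' i, μ (dyC (I i).1 (I i).2) ≤ μ (dyC nh kh) :=
      (ENNReal.mul_le_mul_iff_right hK0 hKt).mp hsum'
    calc (∑' i, μ (dyC (I i).1 (I i).2)) * 2
        ≤ (∑' i, μ (dyC (I i).1 (I i).2)) * 100 := by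
          exact mul_le_mul_right (by norm_num) _
      _ = 100 * ∑' i, μ (dyC (I i).1 (I i).2) := by rw [mul_comm]
      _ ≤ μ (dyC nh kh) := h100
end
end

section
/- Let $T$ be a Calderón–Zygmund operator with kernel $K$ satisfying $|K(t,s)-K(t',s)| \le |t-t'|^{\epsilon}/|t-s|^{d+\epsilon}$ for $|t-t'|\le\frac{1}{2}|t-s|$. Let $I,J$ be cubes with $\ell(I)\le\ell(J)$ and $\operatorname{dist}(I,J)\ge\ell(J)$, and let $\varphi\in L^2(\mu)$ be supported on $I$ with $\int\varphi\,d\mu=0$ and $\psi\in L^2(\nu)$ supported on $J$. Then $|\int\!\!\int K(t,s)\varphi(t)\psi(s)\,d\mu(t)\,d\nu(s)| \le A\,\frac{\ell(I)^{\epsilon}}{(\operatorname{dist}(I,J)+\ell(I)+\ell(J))^{d+\epsilon}}\,\mu(I)^{1/2}\nu(J)^{1/2}\|\varphi\|_{L^2(\mu)}\|\psi\|_{L^2(\nu)}$. -/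
/-!
Since `φ` has mean zero, `∫ K(t,s) φ(t) dμ(t) = ∫ (K(t,s) - K(c,s)) φ(t) dμ(t)` with `c` the
centre of `I`, and for `s ∈ J` the smoothness of `K` bounds the bracket by
`ℓ(I)^ε / dist(I,J)^(d+ε)`. Integrating against `ψ` and applying Cauchy–Schwarz on `I` and `J`
gives the estimate with `dist(I,J)` in place of `dist(I,J) + ℓ(I) + ℓ(J)`; the two are comparable
up to a factor `3` because `ℓ(I) ≤ ℓ(J) ≤ dist(I,J)`.
-/

open MeasureTheory Set
open scoped ENNReal
noncomputable section

/-- The (closed, axis-parallel) cube with lower-left corner `a` and side length `ℓ`. -/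
def cube {d : ℕ} (a : Rd d) (ℓ : ℝ) : Set (Rd d) := {x | ∀ i, a i ≤ x i ∧ x i ≤ a i + ℓ}

/-- Distance between two sets: `inf { dist x y : x ∈ s, y ∈ t }`. -/
def setDist {X : Type*} [PseudoMetricSpace X] (s t : Set X) : ℝ :=
  sInf ((fun p : X × X => dist p.1 p.2) '' s ×ˢ t)

theorem cube_eq_Icc {d : ℕ} (a : Rd d) (ℓ : ℝ) : cube a ℓ = Icc a (fun i => a i + ℓ) := by
  ext x
  exact ⟨fun h => ⟨fun i => (h i).1, fun i => (h i).2⟩, fun h i => ⟨h.1 i, h.2 i⟩⟩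

theorem isCompact_cube {d : ℕ} (a : Rd d) (ℓ : ℝ) : IsCompact (cube a ℓ) := by
  rw [cube_eq_Icc]
  exact isCompact_Icc

def cubeCenter {d : ℕ} (a : Rd d) (ℓ : ℝ) : Rd d := fun i => a i + ℓ / 2

theorem norm_sub_cubeCenter_le {d : ℕ} {a t : Rd d} {ℓ : ℝ} (hℓ : 0 ≤ ℓ) (ht : t ∈ cube a ℓ) :
    ‖t - cubeCenter a ℓ‖ ≤ ℓ / 2 := by
  refine (pi_norm_le_iff_of_nonneg (by positivity)).2 fun i => ?_
  rw [Real.norm_eq_abs, abs_le, Pi.sub_apply, cubeCenter]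
  constructor <;> linarith [(ht i).1, (ht i).2]

theorem setDist_le_dist {X : Type*} [PseudoMetricSpace X] {s t : Set X} {x y : X}
    (hx : x ∈ s) (hy : y ∈ t) : setDist s t ≤ dist x y := by
  refine csInf_le ⟨0, ?_⟩ ⟨(x, y), ⟨hx, hy⟩, rfl⟩
  rintro _ ⟨⟨a, b⟩, -, rfl⟩
  exact dist_nonneg

section Integrals

variable {X : Type*} [MeasurableSpace X] {μ : Measure X} {f g : X → ℝ} {S : Set X} {C : ℝ}

theorem eLpNorm_one_le_eLpNorm_two_mul_measure_rpow (hf : AEStronglyMeasurable f μ)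
    (hfS : ∀ x ∉ S, f x = 0) : eLpNorm f 1 μ ≤ eLpNorm f 2 μ * μ S ^ (1 / 2 : ℝ) := by
  have hsupp : f.support ⊆ S := fun x hx => by_contra fun hxS => hx (hfS x hxS)
  have h := eLpNorm_le_eLpNorm_mul_rpow_measure_univ (μ := μ.restrict S) (p := 1) (q := 2)
    one_le_two hf.restrict
  rw [eLpNorm_restrict_eq_of_support_subset hsupp, eLpNorm_restrict_eq_of_support_subset hsupp,
    Measure.restrict_apply_univ] at h
  convert h using 3
  norm_num

theorem MeasureTheory.MemLp.integrable_of_forall_notMem_eq_zero (hf : MemLp f 2 μ) (hS : μ S ≠ ∞)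
    (hfS : ∀ x ∉ S, f x = 0) : Integrable f μ := by
  refine memLp_one_iff_integrable.1 ⟨hf.1, ?_⟩
  calc eLpNorm f 1 μ ≤ eLpNorm f 2 μ * μ S ^ (1 / 2 : ℝ) :=
        eLpNorm_one_le_eLpNorm_two_mul_measure_rpow hf.1 hfS
    _ < ∞ := ENNReal.mul_lt_top hf.2 (ENNReal.rpow_lt_top_of_nonneg (by norm_num) hS)

theorem integral_abs_le_measure_rpow_mul_eLpNorm (hf : MemLp f 2 μ) (hS : μ S ≠ ∞)
    (hfS : ∀ x ∉ S, f x = 0) :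
    ∫ x, |f x| ∂μ ≤ (μ S).toReal ^ (1 / 2 : ℝ) * (eLpNorm f 2 μ).toReal := by
  have h := eLpNorm_one_le_eLpNorm_two_mul_measure_rpow hf.1 hfS
  rw [eLpNorm_one_eq_lintegral_enorm] at h
  have hfin : eLpNorm f 2 μ * μ S ^ (1 / 2 : ℝ) ≠ ∞ :=
    ENNReal.mul_ne_top hf.2.ne (ENNReal.rpow_ne_top_of_nonneg (by norm_num) hS)
  simp_rw [← Real.norm_eq_abs]
  rw [integral_norm_eq_lintegral_enorm hf.1, mul_comm, ENNReal.toReal_rpow, ← ENNReal.toReal_mul]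
  exact ENNReal.toReal_mono hfin h

theorem abs_mul_le_mul_abs_of_ne_zero {a b : ℝ} (h : b ≠ 0 → |a| ≤ C) : |a * b| ≤ C * |b| := by
  rcases eq_or_ne b 0 with rfl | hb
  · simp
  · rw [abs_mul]
    exact mul_le_mul_of_nonneg_right (h hb) (abs_nonneg b)

theorem abs_integral_mul_le_of_abs_le (hg : Integrable g μ) (hf : ∀ x, g x ≠ 0 → |f x| ≤ C) :
    |∫ x, f x * g x ∂μ| ≤ C * ∫ x, |g x| ∂μ := by
  rw [← integral_const_mul]
  exact norm_integral_le_of_norm_le (f := fun x => f x * g x) (hg.abs.const_mul C)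
    (ae_of_all _ fun x => abs_mul_le_mul_abs_of_ne_zero (hf x))

theorem abs_integral_mul_le_of_integral_eq_zero (hf : AEStronglyMeasurable f μ)
    (hg : Integrable g μ) (hg0 : ∫ x, g x ∂μ = 0) {c : ℝ} (hfc : ∀ x, g x ≠ 0 → |f x - c| ≤ C) :
    |∫ x, f x * g x ∂μ| ≤ C * ∫ x, |g x| ∂μ := by
  have hint : Integrable (fun x => (f x - c) * g x) μ :=
    (hg.abs.const_mul C).mono' ((hf.sub aestronglyMeasurable_const).mul hg.1)
      (ae_of_all _ fun x => abs_mul_le_mul_abs_of_ne_zero (hfc x))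
  have hsub : ∫ x, f x * g x ∂μ = ∫ x, (f x - c) * g x ∂μ := by
    calc ∫ x, f x * g x ∂μ = ∫ x, ((f x - c) * g x + c * g x) ∂μ := by
          congr 1; ext x; ring
      _ = ∫ x, (f x - c) * g x ∂μ := by
          rw [integral_add hint (hg.const_mul c), integral_const_mul, hg0, mul_zero, add_zero]
  rw [hsub]
  exact abs_integral_mul_le_of_abs_le hg hfc

end Integrals

section Kernel

variable {E : Type*} [SeminormedAddCommGroup E] {K : E → E → ℝ} {ε p : ℝ}

theorem abs_kernel_sub_le (hε : 0 ≤ ε) (hp : 0 ≤ p)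
    (hK : ∀ t t' s, ‖t - t'‖ ≤ ‖t - s‖ / 2 → |K t s - K t' s| ≤ ‖t - t'‖ ^ ε / ‖t - s‖ ^ p)
    {t c s : E} {ℓ D : ℝ} (htc : ‖t - c‖ ≤ ℓ / 2) (hℓD : ℓ ≤ D) (hD : 0 < D)
    (hts : D ≤ ‖t - s‖) : |K t s - K c s| ≤ ℓ ^ ε / D ^ p := by
  have hℓ : 0 ≤ ℓ := by linarith [norm_nonneg (t - c)]
  calc |K t s - K c s| ≤ ‖t - c‖ ^ ε / ‖t - s‖ ^ p := hK t c s (by linarith)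
    _ ≤ ℓ ^ ε / D ^ p := by gcongr; linarith

theorem abs_integral_kernel_mul_le [MeasurableSpace E] (hε : 0 ≤ ε) (hp : 0 ≤ p)
    (hKm : Measurable (Function.uncurry K))
    (hK : ∀ t t' s, ‖t - t'‖ ≤ ‖t - s‖ / 2 → |K t s - K t' s| ≤ ‖t - t'‖ ^ ε / ‖t - s‖ ^ p)
    {μ : Measure E} {φ : E → ℝ} (hφ : Integrable φ μ) (hφ0 : ∫ t, φ t ∂μ = 0)
    {I : Set E} {c : E} {ℓ : ℝ} (hI : ∀ t ∈ I, ‖t - c‖ ≤ ℓ / 2) (hφI : ∀ t ∉ I, φ t = 0)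
    {s : E} {D : ℝ} (hℓD : ℓ ≤ D) (hD : 0 < D) (hs : ∀ t ∈ I, D ≤ ‖t - s‖) :
    |∫ t, K t s * φ t ∂μ| ≤ ℓ ^ ε / D ^ p * ∫ t, |φ t| ∂μ := by
  refine abs_integral_mul_le_of_integral_eq_zero hKm.of_uncurry_right.aestronglyMeasurable hφ hφ0
    (c := K c s) fun t ht => ?_
  have htI : t ∈ I := by_contra fun h => ht (hφI t h)
  exact abs_kernel_sub_le hε hp hK (hI t htI) hℓD hD (hs t htI)

end Kernel

theorem div_rpow_le_three_rpow_mul_div_rpow {x a b D p : ℝ} (hx : 0 ≤ x) (hp : 0 ≤ p)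
    (ha : 0 ≤ a) (hb : 0 ≤ b) (haD : a ≤ D) (hbD : b ≤ D) (hD : 0 < D) :
    x / D ^ p ≤ 3 ^ p * (x / (D + a + b) ^ p) := by
  have hsum : (D + a + b) ^ p ≤ 3 ^ p * D ^ p := by
    rw [← Real.mul_rpow (by norm_num) hD.le]
    gcongr
    linarith
  have h3 : (3 : ℝ) ^ p ≠ 0 := by positivity
  calc x / D ^ p = 3 ^ p * x / (3 ^ p * D ^ p) := (mul_div_mul_left x _ h3).symm
    _ ≤ 3 ^ p * x / (D + a + b) ^ p := by gcongr
    _ = 3 ^ p * (x / (D + a + b) ^ p) := mul_div_assoc _ _ _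

theorem stmt7_general {d : ℕ} (ε : ℝ) (hε : 0 < ε) :
    ∃ A : ℝ, 0 < A ∧
      ∀ (K : Rd d → Rd d → ℝ), Measurable (Function.uncurry K) →
        (∀ t s, t ≠ s → |K t s| ≤ ‖t - s‖ ^ (-(d : ℝ))) →
        (∀ t t' s, ‖t - t'‖ ≤ ‖t - s‖ / 2 →
          |K t s - K t' s| ≤ ‖t - t'‖ ^ ε / ‖t - s‖ ^ ((d : ℝ) + ε)) →
      ∀ (μ ν : Measure (Rd d)), IsLocallyFiniteMeasure μ → IsLocallyFiniteMeasure ν →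
      ∀ (aI : Rd d) (ℓI : ℝ) (aJ : Rd d) (ℓJ : ℝ), 0 < ℓI → ℓI ≤ ℓJ →
        ℓJ ≤ setDist (cube aI ℓI) (cube aJ ℓJ) →
      ∀ (φ ψ : Rd d → ℝ),
        Integrable φ μ → MemLp φ 2 μ → MemLp ψ 2 ν →
        (∀ x, x ∉ cube aI ℓI → φ x = 0) → (∫ t, φ t ∂μ) = 0 →
        (∀ x, x ∉ cube aJ ℓJ → ψ x = 0) →
        |∫ s, (∫ t, K t s * φ t ∂μ) * ψ s ∂ν|
          ≤ A * (ℓI ^ ε / (setDist (cube aI ℓI) (cube aJ ℓJ) + ℓI + ℓJ) ^ ((d : ℝ) + ε))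
              * ((μ (cube aI ℓI)).toReal) ^ (1/2 : ℝ) * ((ν (cube aJ ℓJ)).toReal) ^ (1/2 : ℝ)
              * (eLpNorm φ 2 μ).toReal * (eLpNorm ψ 2 ν).toReal := by
  refine ⟨3 ^ ((d : ℝ) + ε), by positivity, ?_⟩
  intro K hKm _ hK μ ν _ _ aI ℓI aJ ℓJ hℓI hℓIJ hdist φ ψ hφ hφ2 hψ2 hφI hφ0 hψJ
  set D := setDist (cube aI ℓI) (cube aJ ℓJ)
  have hD : 0 < D := by linarith
  have hinner : ∀ s, ψ s ≠ 0 →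
      |∫ t, K t s * φ t ∂μ| ≤ ℓI ^ ε / D ^ ((d : ℝ) + ε) * ∫ t, |φ t| ∂μ := fun s hs =>
    abs_integral_kernel_mul_le hε.le (by positivity) hKm hK hφ hφ0
      (fun t => norm_sub_cubeCenter_le hℓI.le) hφI (hℓIJ.trans hdist) hD
      fun t ht => (setDist_le_dist ht (by_contra fun h => hs (hψJ s h))).trans_eq (dist_eq_norm t s)
  have hψ : Integrable ψ ν :=
    hψ2.integrable_of_forall_notMem_eq_zero (isCompact_cube aJ ℓJ).measure_lt_top.ne hψJ
  have hdecay := div_rpow_le_three_rpow_mul_div_rpow (x := ℓI ^ ε) (by positivity)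
    (by positivity : 0 ≤ (d : ℝ) + ε) hℓI.le (by linarith) (hℓIJ.trans hdist) hdist hD
  have hφCS := integral_abs_le_measure_rpow_mul_eLpNorm hφ2
    (isCompact_cube aI ℓI).measure_lt_top.ne hφI
  have hψCS := integral_abs_le_measure_rpow_mul_eLpNorm hψ2
    (isCompact_cube aJ ℓJ).measure_lt_top.ne hψJ
  have hA : 0 ≤ 3 ^ ((d : ℝ) + ε) * (ℓI ^ ε / (D + ℓI + ℓJ) ^ ((d : ℝ) + ε)) :=
    mul_nonneg (by positivity) (div_nonneg (by positivity) (Real.rpow_nonneg (by linarith) _))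
  calc |∫ s, (∫ t, K t s * φ t ∂μ) * ψ s ∂ν|
      ≤ ℓI ^ ε / D ^ ((d : ℝ) + ε) * (∫ t, |φ t| ∂μ) * ∫ s, |ψ s| ∂ν :=
        abs_integral_mul_le_of_abs_le hψ hinner
    _ ≤ 3 ^ ((d : ℝ) + ε) * (ℓI ^ ε / (D + ℓI + ℓJ) ^ ((d : ℝ) + ε))
          * ((μ (cube aI ℓI)).toReal ^ (1 / 2 : ℝ) * (eLpNorm φ 2 μ).toReal)
          * ((ν (cube aJ ℓJ)).toReal ^ (1 / 2 : ℝ) * (eLpNorm ψ 2 ν).toReal) := by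
        gcongr
    _ = _ := by ring

/-- Long-range estimate: if `K` is a Calderón–Zygmund kernel, `I, J` are cubes with
`ℓ(I) ≤ ℓ(J)` and `dist(I,J) ≥ ℓ(J)`, `φ` is supported on `I` with zero `μ`-mean and
`ψ` is supported on `J`, then
`|∬ K(t,s) φ(t) ψ(s) dμ(t) dν(s)| ≤ A ℓ(I)^ε (dist(I,J)+ℓ(I)+ℓ(J))^{-(d+ε)}
  μ(I)^{1/2} ν(J)^{1/2} ‖φ‖_{L²(μ)} ‖ψ‖_{L²(ν)}`. -/
theorem stmt7 {d : ℕ} (hd : 0 < d) (ε : ℝ) (hε : 0 < ε) :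
    ∃ A : ℝ, 0 < A ∧
      ∀ (K : Rd d → Rd d → ℝ), Measurable (Function.uncurry K) →
        (∀ t s, t ≠ s → |K t s| ≤ ‖t - s‖ ^ (-(d : ℝ))) →
        (∀ t t' s, ‖t - t'‖ ≤ ‖t - s‖ / 2 →
          |K t s - K t' s| ≤ ‖t - t'‖ ^ ε / ‖t - s‖ ^ ((d : ℝ) + ε)) →
      ∀ (μ ν : Measure (Rd d)), IsLocallyFiniteMeasure μ → IsLocallyFiniteMeasure ν →
      ∀ (aI : Rd d) (ℓI : ℝ) (aJ : Rd d) (ℓJ : ℝ), 0 < ℓI → ℓI ≤ ℓJ →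
        ℓJ ≤ setDist (cube aI ℓI) (cube aJ ℓJ) →
      ∀ (φ ψ : Rd d → ℝ),
        Integrable φ μ → MemLp φ 2 μ → MemLp ψ 2 ν →
        (∀ x, x ∉ cube aI ℓI → φ x = 0) → (∫ t, φ t ∂μ) = 0 →
        (∀ x, x ∉ cube aJ ℓJ → ψ x = 0) →
        |∫ s, (∫ t, K t s * φ t ∂μ) * ψ s ∂ν|
          ≤ A * (ℓI ^ ε / (setDist (cube aI ℓI) (cube aJ ℓJ) + ℓI + ℓJ) ^ ((d : ℝ) + ε))
              * ((μ (cube aI ℓI)).toReal) ^ (1/2 : ℝ) * ((ν (cube aJ ℓJ)).toReal) ^ (1/2 : ℝ)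
              * (eLpNorm φ 2 μ).toReal * (eLpNorm ψ 2 ν).toReal :=
  stmt7_general ε hε
end
end

section
/- (Carleson embedding theorem) Let $\mu$ be a locally finite positive measure on $\mathbb{R}^d$ and $\{a_I\}_{I\in\mathcal{D}}$ nonnegative numbers indexed by dyadic cubes satisfying the Carleson condition $\sum_{I'\subset I, I'\in\mathcal{D}} a_{I'} \le C\,\mu(I)$ for all $I\in\mathcal{D}$. Then for every $\varphi\in L^2(\mu)$, $\sum_{I\in\mathcal{D}} |\langle\varphi\rangle_{\mu,I}|^2 a_I \le 4C\|\varphi\|_{L^2(\mu)}^2$, where $\langle\varphi\rangle_{\mu,I} = \frac{1}{\mu(I)}\int_I\varphi\,d\mu$ (terms with $\mu(I)=0$ are omitted). -/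
/-!
Dyadic cubes form a laminar family: any two are nested or disjoint. For a finite family `F` of
cubes let `M x` be the largest average `⟨|φ|⟩_I` over the cubes `I ∈ F` containing `x`. Each level
set `{M > t}` is the disjoint union of the maximal cubes `I ∈ F` with `⟨|φ|⟩_I > t`, so
(i) the Carleson condition gives `∑_{⟨|φ|⟩_I > t} a_I ≤ C μ {M > t}`, and
(ii) `t μ {M > t} ≤ ∫_{M > t} |φ| dμ`.
By the layer-cake formula, (i) gives `∑_I ⟨|φ|⟩_I² a_I ≤ C ‖M‖₂²`, and (ii) gives Doob's bound
`‖M‖₂² ≤ 2 ∫ |φ| M dμ ≤ 2 ‖φ‖₂ ‖M‖₂`, hence `‖M‖₂ ≤ 2 ‖φ‖₂` since `‖M‖₂ < ∞` for finite `F`.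
-/

open MeasureTheory Set
open scoped ENNReal
noncomputable section

lemma ENNReal.le_sq_of_le_mul_rpow_half {A c : ℝ≥0∞} (hA : A ≠ ∞) (h : A ≤ c * A ^ (1 / 2 : ℝ)) :
    A ≤ c ^ 2 := by
  rcases eq_or_ne A 0 with rfl | hA0
  · exact zero_le
  have hsq : A = A ^ (1 / 2 : ℝ) * A ^ (1 / 2 : ℝ) := by
    rw [← ENNReal.rpow_add _ _ hA0 hA]; norm_num
  have hroot : A ^ (1 / 2 : ℝ) ≤ c := by
    have h' : A ^ (1 / 2 : ℝ) * A ^ (1 / 2 : ℝ) ≤ c * A ^ (1 / 2 : ℝ) := by rwa [← hsq]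
    exact (ENNReal.mul_le_mul_iff_left (ENNReal.rpow_pos (pos_iff_ne_zero.2 hA0) hA).ne'
      (ENNReal.rpow_ne_top_of_nonneg (by norm_num) hA)).mp h'
  calc A = A ^ (1 / 2 : ℝ) * A ^ (1 / 2 : ℝ) := hsq
    _ ≤ c * c := mul_le_mul' hroot hroot
    _ = c ^ 2 := (sq c).symm

section LayerCake

variable {α : Type*} [MeasurableSpace α] {μ : Measure α}

lemma lintegral_sq_eq_lintegral_meas_lt {f : α → ℝ≥0∞} (hf : AEMeasurable f μ)
    (hf_fin : ∀ x, f x ≠ ∞) :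
    ∫⁻ x, f x ^ 2 ∂μ =
      2 * ∫⁻ t in Ioi 0, μ {x | ENNReal.ofReal t < f x} * ENNReal.ofReal t := by
  have h := lintegral_rpow_eq_lintegral_meas_lt_mul μ (f := fun x => (f x).toReal)
    (Filter.Eventually.of_forall fun _ => ENNReal.toReal_nonneg) hf.ennreal_toReal two_pos
  simp only [Real.rpow_two, ENNReal.ofReal_pow ENNReal.toReal_nonneg,
    ENNReal.ofReal_toReal (hf_fin _), ENNReal.ofReal_ofNat] at h
  rw [h]
  congr 1
  refine setLIntegral_congr_fun measurableSet_Ioi fun t ht => ?_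
  simp only [ENNReal.ofReal_lt_iff_lt_toReal (le_of_lt ht) (hf_fin _)]
  norm_num

lemma lintegral_mul_eq_lintegral_setLIntegral_lt {f g : α → ℝ≥0∞} (hf : Measurable f)
    (hf_fin : ∀ x, f x ≠ ∞) (hg : AEMeasurable g μ) :
    ∫⁻ x, g x * f x ∂μ = ∫⁻ t in Ioi 0, ∫⁻ x in {x | ENNReal.ofReal t < f x}, g x ∂μ := by
  have h := lintegral_eq_lintegral_meas_lt (μ.withDensity g) (f := fun x => (f x).toReal)
    (Filter.Eventually.of_forall fun _ => ENNReal.toReal_nonneg) hf.ennreal_toReal.aemeasurable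
  simp only [ENNReal.ofReal_toReal (hf_fin _)] at h
  rw [← Pi.mul_def, ← lintegral_withDensity_eq_lintegral_mul₀ hg hf.aemeasurable, h]
  refine setLIntegral_congr_fun measurableSet_Ioi fun t ht => ?_
  simp only [ENNReal.ofReal_lt_iff_lt_toReal (le_of_lt ht) (hf_fin _)]
  exact withDensity_apply _ (measurableSet_lt measurable_const hf.ennreal_toReal)

lemma lintegral_sq_le_of_meas_lt_le {β : Type*} [MeasurableSpace β] {ν : Measure β}
    {h : β → ℝ≥0∞} {f : α → ℝ≥0∞} (hh : AEMeasurable h ν) (hh_fin : ∀ y, h y ≠ ∞)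
    (hf : AEMeasurable f μ) (hf_fin : ∀ x, f x ≠ ∞) {C : ℝ≥0∞}
    (hle : ∀ t : ℝ, 0 < t →
      ν {y | ENNReal.ofReal t < h y} ≤ C * μ {x | ENNReal.ofReal t < f x}) :
    ∫⁻ y, h y ^ 2 ∂ν ≤ C * ∫⁻ x, f x ^ 2 ∂μ := by
  have hmeas : Measurable fun t : ℝ => μ {x | ENNReal.ofReal t < f x} * ENNReal.ofReal t := by
    refine Measurable.mul (Antitone.measurable fun s t hst => measure_mono fun x hx => ?_)
      ENNReal.measurable_ofReal
    exact lt_of_le_of_lt (ENNReal.ofReal_le_ofReal hst) hx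
  rw [lintegral_sq_eq_lintegral_meas_lt hh hh_fin, lintegral_sq_eq_lintegral_meas_lt hf hf_fin,
    mul_left_comm, ← lintegral_const_mul C hmeas]
  refine mul_le_mul_right (setLIntegral_mono' measurableSet_Ioi fun t ht => ?_) 2
  rw [← mul_assoc]
  exact mul_le_mul_left (hle t ht) _

lemma lintegral_sq_le_four_mul_of_meas_lt_le {f g : α → ℝ≥0∞} (hf : Measurable f)
    (hf_fin : ∀ x, f x ≠ ∞) (hf2 : ∫⁻ x, f x ^ 2 ∂μ ≠ ∞) (hg : AEMeasurable g μ)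
    (hweak : ∀ t : ℝ, 0 < t → μ {x | ENNReal.ofReal t < f x} * ENNReal.ofReal t ≤
      ∫⁻ x in {x | ENNReal.ofReal t < f x}, g x ∂μ) :
    ∫⁻ x, f x ^ 2 ∂μ ≤ 4 * ∫⁻ x, g x ^ 2 ∂μ := by
  have hHolder : ∫⁻ x, g x * f x ∂μ ≤
      (∫⁻ x, g x ^ 2 ∂μ) ^ (1 / 2 : ℝ) * (∫⁻ x, f x ^ 2 ∂μ) ^ (1 / 2 : ℝ) := by
    simpa only [Pi.mul_apply, ENNReal.rpow_two] using
      ENNReal.lintegral_mul_le_Lp_mul_Lq μ Real.HolderConjugate.two_two hg hf.aemeasurable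
  have hle : ∫⁻ x, f x ^ 2 ∂μ ≤
      2 * (∫⁻ x, g x ^ 2 ∂μ) ^ (1 / 2 : ℝ) * (∫⁻ x, f x ^ 2 ∂μ) ^ (1 / 2 : ℝ) :=
    calc ∫⁻ x, f x ^ 2 ∂μ
        = 2 * ∫⁻ t in Ioi 0, μ {x | ENNReal.ofReal t < f x} * ENNReal.ofReal t :=
          lintegral_sq_eq_lintegral_meas_lt hf.aemeasurable hf_fin
      _ ≤ 2 * ∫⁻ t in Ioi 0, ∫⁻ x in {x | ENNReal.ofReal t < f x}, g x ∂μ :=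
          mul_le_mul_right (setLIntegral_mono' measurableSet_Ioi hweak) 2
      _ = 2 * ∫⁻ x, g x * f x ∂μ := by
          rw [lintegral_mul_eq_lintegral_setLIntegral_lt hf hf_fin hg]
      _ ≤ _ := by rw [mul_assoc]; gcongr
  calc ∫⁻ x, f x ^ 2 ∂μ ≤ (2 * (∫⁻ x, g x ^ 2 ∂μ) ^ (1 / 2 : ℝ)) ^ 2 :=
        ENNReal.le_sq_of_le_mul_rpow_half hf2 hle
    _ = 4 * ∫⁻ x, g x ^ 2 ∂μ := by
        rw [mul_pow, ← ENNReal.rpow_natCast (_ ^ (1 / 2 : ℝ)), ← ENNReal.rpow_mul]; norm_num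

end LayerCake

def Laminar {ι α : Type*} (Q : ι → Set α) : Prop :=
  ∀ p q, Q p ⊆ Q q ∨ Q q ⊆ Q p ∨ Disjoint (Q p) (Q q)

namespace Laminar

variable {ι α : Type*} {Q : ι → Set α}

lemma exists_pairwiseDisjoint_subcover (hQ : Laminar Q) (G : Finset ι) :
    ∃ M ⊆ G, (M : Set ι).PairwiseDisjoint Q ∧ ∀ p ∈ G, ∃ q ∈ M, Q p ⊆ Q q := by
  classical
  induction G using Finset.induction_on with
  | empty => exact ⟨∅, subset_rfl, by simp, by simp⟩
  | @insert p G _ ih =>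
    obtain ⟨M, hMG, hdisj, hcover⟩ := ih
    by_cases hp : ∃ q ∈ M, Q p ⊆ Q q
    · refine ⟨M, hMG.trans (Finset.subset_insert p G), hdisj, ?_⟩
      simpa only [Finset.forall_mem_insert] using ⟨hp, hcover⟩
    push Not at hp
    set M' := M.filter fun q => ¬Q q ⊆ Q p
    refine ⟨insert p M', Finset.insert_subset_insert p ((Finset.filter_subset _ M).trans hMG),
      ?_, ?_⟩
    · rw [Finset.coe_insert]
      refine (hdisj.subset (Finset.coe_subset.2 (Finset.filter_subset _ M))).insert fun q hq _ => ?_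
      obtain ⟨hqM, hqp⟩ := Finset.mem_filter.mp hq
      rcases hQ p q with hpq | hqp' | hd
      · exact absurd hpq (hp q hqM)
      · exact absurd hqp' hqp
      · exact hd
    · simp only [Finset.forall_mem_insert, Finset.exists_mem_insert]
      refine ⟨Or.inl subset_rfl, fun r hr => ?_⟩
      obtain ⟨q, hqM, hrq⟩ := hcover r hr
      by_cases hqp : Q q ⊆ Q p
      · exact Or.inl (hrq.trans hqp)
      · exact Or.inr ⟨q, Finset.mem_filter.mpr ⟨hqM, hqp⟩, hrq⟩

variable [MeasurableSpace α] {μ : Measure α}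

lemma sum_le_mul_measure_biUnion (hQ : Laminar Q) (hQm : ∀ p, MeasurableSet (Q p))
    {a : ι → ℝ≥0∞} {C : ℝ≥0∞}
    (hCarl : ∀ q, ∑' p : {p // Q p ⊆ Q q}, a p ≤ C * μ (Q q)) (G : Finset ι) :
    ∑ p ∈ G, a p ≤ C * μ (⋃ p ∈ G, Q p) := by
  classical
  obtain ⟨M, hMG, hdisj, hcover⟩ := hQ.exists_pairwiseDisjoint_subcover G
  calc ∑ p ∈ G, a p ≤ ∑ p ∈ G, ∑ q ∈ M, {p | Q p ⊆ Q q}.indicator a p := by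
        refine Finset.sum_le_sum fun p hp => ?_
        obtain ⟨q, hqM, hpq⟩ := hcover p hp
        calc a p = {p | Q p ⊆ Q q}.indicator a p := (indicator_of_mem hpq a).symm
          _ ≤ _ := Finset.single_le_sum (f := fun q => {p | Q p ⊆ Q q}.indicator a p)
            (fun _ _ => zero_le) hqM
    _ = ∑ q ∈ M, ∑ p ∈ G, {p | Q p ⊆ Q q}.indicator a p := Finset.sum_comm
    _ ≤ ∑ q ∈ M, C * μ (Q q) := by
        refine Finset.sum_le_sum fun q _ => ?_
        calc ∑ p ∈ G, {p | Q p ⊆ Q q}.indicator a p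
            ≤ ∑' p, {p | Q p ⊆ Q q}.indicator a p := ENNReal.sum_le_tsum G
          _ = ∑' p : {p // Q p ⊆ Q q}, a p := (tsum_subtype _ a).symm
          _ ≤ C * μ (Q q) := hCarl q
    _ = C * μ (⋃ q ∈ M, Q q) := by
        rw [measure_biUnion_finset hdisj fun q _ => hQm q, Finset.mul_sum]
    _ ≤ C * μ (⋃ p ∈ G, Q p) :=
        mul_le_mul_right (measure_mono (Set.biUnion_subset_biUnion_left hMG)) C

lemma mul_measure_biUnion_le (hQ : Laminar Q) (hQm : ∀ p, MeasurableSet (Q p))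
    {g : α → ℝ≥0∞} {c : ℝ≥0∞} {G : Finset ι}
    (hG : ∀ p ∈ G, c * μ (Q p) ≤ ∫⁻ x in Q p, g x ∂μ) :
    c * μ (⋃ p ∈ G, Q p) ≤ ∫⁻ x in ⋃ p ∈ G, Q p, g x ∂μ := by
  obtain ⟨M, hMG, hdisj, hcover⟩ := hQ.exists_pairwiseDisjoint_subcover G
  have hunion : ⋃ p ∈ G, Q p = ⋃ q ∈ M, Q q :=
    (Set.iUnion₂_subset fun p hp => (hcover p hp).elim fun q ⟨hqM, hpq⟩ =>
      hpq.trans (Set.subset_biUnion_of_mem (u := Q) hqM)).antisymm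
      (Set.biUnion_subset_biUnion_left hMG)
  rw [hunion, measure_biUnion_finset hdisj fun q _ => hQm q,
    lintegral_biUnion_finset hdisj fun q _ => hQm q, Finset.mul_sum]
  exact Finset.sum_le_sum fun q hq => hG q (hMG hq)

end Laminar

section MaximalFunction

variable {ι α : Type*} [MeasurableSpace α] {μ : Measure α} {Q : ι → Set α} {F : Finset ι}
  {g : α → ℝ≥0∞}

variable (μ Q F g) in
def finsetMaximalFunction (x : α) : ℝ≥0∞ :=
  F.sup fun p => (Q p).indicator (fun _ => ⨍⁻ y in Q p, g y ∂μ) x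

lemma setOf_lt_finsetMaximalFunction (c : ℝ≥0∞) :
    {x | c < finsetMaximalFunction μ Q F g x} =
      ⋃ p ∈ F.filter fun p => c < ⨍⁻ y in Q p, g y ∂μ, Q p := by
  ext x
  simp only [finsetMaximalFunction, mem_ofPred_eq, Finset.lt_sup_iff, mem_iUnion,
    Finset.mem_filter, exists_prop]
  constructor
  · rintro ⟨p, hp, hlt⟩
    by_cases hx : x ∈ Q p
    · exact ⟨p, ⟨hp, by simpa [hx] using hlt⟩, hx⟩
    · simp [hx] at hlt
  · rintro ⟨p, ⟨hp, hlt⟩, hx⟩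
    exact ⟨p, hp, by simpa [hx] using hlt⟩

lemma measurable_finsetMaximalFunction (hQm : ∀ p, MeasurableSet (Q p)) :
    Measurable (finsetMaximalFunction μ Q F g) := by
  refine measurable_of_Ioi fun c => ?_
  simp only [preimage, mem_Ioi, setOf_lt_finsetMaximalFunction]
  exact Finset.measurableSet_biUnion _ fun p _ => hQm p

lemma finsetMaximalFunction_le_indicator (x : α) :
    finsetMaximalFunction μ Q F g x ≤
      (⋃ p ∈ F, Q p).indicator (fun _ => F.sup fun p => ⨍⁻ y in Q p, g y ∂μ) x := by
  refine Finset.sup_le fun p hp => ?_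
  by_cases hx : x ∈ Q p
  · rw [indicator_of_mem hx, indicator_of_mem (mem_iUnion₂_of_mem hp hx)]
    exact Finset.le_sup (f := fun p => ⨍⁻ y in Q p, g y ∂μ) hp
  · simp [indicator_of_notMem hx]

lemma sup_setLAverage_lt_top (hgQ : ∀ p, ∫⁻ x in Q p, g x ∂μ ≠ ∞) :
    (F.sup fun p => ⨍⁻ y in Q p, g y ∂μ) < ∞ :=
  Finset.sup_lt_iff ENNReal.zero_lt_top |>.mpr fun p _ => setLAverage_lt_top (hgQ p)

lemma finsetMaximalFunction_lt_top (hgQ : ∀ p, ∫⁻ x in Q p, g x ∂μ ≠ ∞) (x : α) :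
    finsetMaximalFunction μ Q F g x < ∞ :=
  (finsetMaximalFunction_le_indicator x).trans_lt <|
    (indicator_le_self' (fun _ _ => zero_le) x).trans_lt (sup_setLAverage_lt_top hgQ)

lemma lintegral_finsetMaximalFunction_sq_ne_top (hQm : ∀ p, MeasurableSet (Q p))
    (hQfin : ∀ p, μ (Q p) ≠ ∞) (hgQ : ∀ p, ∫⁻ x in Q p, g x ∂μ ≠ ∞) :
    ∫⁻ x, finsetMaximalFunction μ Q F g x ^ 2 ∂μ ≠ ∞ := by
  set U := ⋃ p ∈ F, Q p
  set c := F.sup fun p => ⨍⁻ y in Q p, g y ∂μ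
  have hle (x : α) : finsetMaximalFunction μ Q F g x ^ 2 ≤ U.indicator (fun _ => c ^ 2) x :=
    calc finsetMaximalFunction μ Q F g x ^ 2 ≤ U.indicator (fun _ => c) x ^ 2 := by
          gcongr
          exact finsetMaximalFunction_le_indicator x
      _ = U.indicator (fun _ => c ^ 2) x := by by_cases hx : x ∈ U <;> simp [hx]
  refine ne_top_of_le_ne_top ?_ (lintegral_mono hle)
  rw [lintegral_indicator_const (Finset.measurableSet_biUnion _ fun p _ => hQm p)]
  exact ENNReal.mul_ne_top (ENNReal.pow_ne_top (sup_setLAverage_lt_top hgQ).ne)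
    (measure_biUnion_lt_top F.finite_toSet fun p _ => (hQfin p).lt_top).ne

lemma Laminar.measure_lt_finsetMaximalFunction_mul_le (hQ : Laminar Q)
    (hQm : ∀ p, MeasurableSet (Q p)) (hQfin : ∀ p, μ (Q p) ≠ ∞) (c : ℝ≥0∞) :
    μ {x | c < finsetMaximalFunction μ Q F g x} * c ≤
      ∫⁻ x in {x | c < finsetMaximalFunction μ Q F g x}, g x ∂μ := by
  rw [setOf_lt_finsetMaximalFunction, mul_comm]
  refine hQ.mul_measure_biUnion_le hQm fun p hp => ?_
  calc c * μ (Q p) ≤ (⨍⁻ y in Q p, g y ∂μ) * μ (Q p) := by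
        gcongr
        exact (Finset.mem_filter.mp hp).2.le
    _ = ∫⁻ x in Q p, g x ∂μ := by rw [mul_comm, measure_mul_setLAverage _ (hQfin p)]

lemma Laminar.sum_filter_lt_le_mul_measure (hQ : Laminar Q) (hQm : ∀ p, MeasurableSet (Q p))
    {a : ι → ℝ≥0∞} {C : ℝ≥0∞}
    (hCarl : ∀ q, ∑' p : {p // Q p ⊆ Q q}, a p ≤ C * μ (Q q)) (c : ℝ≥0∞) :
    ∑ p ∈ F.filter (fun p => c < ⨍⁻ y in Q p, g y ∂μ), a p ≤
      C * μ {x | c < finsetMaximalFunction μ Q F g x} := by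
  rw [setOf_lt_finsetMaximalFunction]
  exact hQ.sum_le_mul_measure_biUnion hQm hCarl _

end MaximalFunction

theorem Laminar.sum_sq_setLAverage_mul_le {ι α : Type*} [MeasurableSpace α] {μ : Measure α}
    {Q : ι → Set α} (hQ : Laminar Q) (hQm : ∀ p, MeasurableSet (Q p))
    (hQfin : ∀ p, μ (Q p) ≠ ∞) {a : ι → ℝ≥0∞} {C : ℝ≥0∞}
    (hCarl : ∀ q, ∑' p : {p // Q p ⊆ Q q}, a p ≤ C * μ (Q q)) {g : α → ℝ≥0∞}
    (hg : AEMeasurable g μ) (hgQ : ∀ p, ∫⁻ x in Q p, g x ∂μ ≠ ∞) (F : Finset ι) :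
    ∑ p ∈ F, (⨍⁻ x in Q p, g x ∂μ) ^ 2 * a p ≤ 4 * C * ∫⁻ x, g x ^ 2 ∂μ := by
  classical
  let _ : MeasurableSpace ι := ⊤
  set avg : ι → ℝ≥0∞ := fun p => ⨍⁻ x in Q p, g x ∂μ
  set M := finsetMaximalFunction μ Q F g
  -- the left-hand side is `∫⁻ avg ^ 2 ∂ν`, which makes the layer-cake comparison applicable
  set ν : Measure ι := ∑ p ∈ F, a p • Measure.dirac p
  have hν : ∀ c, ν {p | c < avg p} = ∑ p ∈ F.filter (fun p => c < avg p), a p := by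
    intro c
    simp [ν, Finset.sum_filter, Measure.dirac_apply' _ MeasurableSpace.measurableSet_top,
      indicator_apply]
  have hM := measurable_finsetMaximalFunction (μ := μ) (F := F) (g := g) hQm
  calc ∑ p ∈ F, avg p ^ 2 * a p = ∫⁻ p, avg p ^ 2 ∂ν := by
        simp [ν, mul_comm]
    _ ≤ C * ∫⁻ x, M x ^ 2 ∂μ := by
        refine lintegral_sq_le_of_meas_lt_le measurable_from_top.aemeasurable
          (fun p => (setLAverage_lt_top (hgQ p)).ne) hM.aemeasurable
          (fun x => (finsetMaximalFunction_lt_top hgQ x).ne) fun t _ => ?_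
        rw [hν]
        exact hQ.sum_filter_lt_le_mul_measure hQm hCarl _
    _ ≤ C * (4 * ∫⁻ x, g x ^ 2 ∂μ) := by
        gcongr
        exact lintegral_sq_le_four_mul_of_meas_lt_le hM
          (fun x => (finsetMaximalFunction_lt_top hgQ x).ne)
          (lintegral_finsetMaximalFunction_sq_ne_top hQm hQfin hgQ) hg
          fun t _ => hQ.measure_lt_finsetMaximalFunction_mul_le hQm hQfin _
    _ = 4 * C * ∫⁻ x, g x ^ 2 ∂μ := by ring

section Dyadic

variable {d : ℕ}

lemma dyC_eq_pi (n : ℤ) (k : Fin d → ℤ) :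
    dyC n k = univ.pi fun i => Ico ((k i : ℝ) * 2 ^ n) ((k i : ℝ) * 2 ^ n + 2 ^ n) := by
  ext x
  simp [dyC, hcube]

lemma measurableSet_dyC (n : ℤ) (k : Fin d → ℤ) : MeasurableSet (dyC n k) := by
  rw [dyC_eq_pi]
  exact MeasurableSet.univ_pi fun _ => measurableSet_Ico

lemma isBounded_dyC (n : ℤ) (k : Fin d → ℤ) : Bornology.IsBounded (dyC n k) := by
  rw [dyC_eq_pi]
  exact Bornology.IsBounded.pi fun _ => Metric.isBounded_Ico _ _

lemma mem_dyC_iff {n : ℤ} {k : Fin d → ℤ} {x : Rd d} :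
    x ∈ dyC n k ↔ ∀ i, ⌊x i / 2 ^ n⌋ = k i := by
  have h2n : (0 : ℝ) < 2 ^ n := by positivity
  simp only [dyC, hcube, mem_ofPred_eq, Int.floor_eq_iff, le_div_iff₀ h2n, div_lt_iff₀ h2n,
    add_mul, one_mul]

lemma floor_div_two_zpow_of_le {n m : ℤ} (h : n ≤ m) (r : ℝ) :
    ⌊r / 2 ^ m⌋ = ⌊r / 2 ^ n⌋ / 2 ^ (m - n).toNat := by
  have h2m : (2 : ℝ) ^ m = 2 ^ n * ((2 ^ (m - n).toNat : ℕ) : ℝ) := by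
    rw [Nat.cast_pow, Nat.cast_ofNat, ← zpow_natCast, Int.toNat_of_nonneg (sub_nonneg.2 h),
      ← zpow_add₀ two_ne_zero, add_sub_cancel]
  rw [h2m, ← div_div, Int.floor_div_natCast, Nat.cast_pow, Nat.cast_ofNat]

lemma dyC_subset_of_le {n m : ℤ} {k l : Fin d → ℤ} (h : n ≤ m)
    (hne : (dyC n k ∩ dyC m l).Nonempty) : dyC n k ⊆ dyC m l := by
  obtain ⟨x, hxk, hxl⟩ := hne
  intro y hy
  rw [mem_dyC_iff] at hxk hxl hy ⊢
  intro i
  rw [floor_div_two_zpow_of_le h, hy i, ← hxk i, ← floor_div_two_zpow_of_le h, hxl i]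

lemma laminar_dyC : Laminar fun p : ℤ × (Fin d → ℤ) => dyC p.1 p.2 := by
  intro p q
  by_cases hd : Disjoint (dyC p.1 p.2) (dyC q.1 q.2)
  · exact Or.inr (Or.inr hd)
  rw [not_disjoint_iff_nonempty_inter] at hd
  rcases le_total p.1 q.1 with h | h
  · exact Or.inl (dyC_subset_of_le h hd)
  · exact Or.inr (Or.inl (dyC_subset_of_le h (inter_comm _ _ ▸ hd)))

end Dyadic

lemma ofReal_sq_setIntegral_div_le_sq_setLAverage {α : Type*} [MeasurableSpace α]
    {μ : Measure α} (φ : α → ℝ) (s : Set α) :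
    ENNReal.ofReal (((∫ x in s, φ x ∂μ) / (μ s).toReal) ^ 2) ≤ (⨍⁻ x in s, ‖φ x‖ₑ ∂μ) ^ 2 := by
  rw [← sq_abs, ENNReal.ofReal_pow (abs_nonneg _), abs_div, abs_of_nonneg ENNReal.toReal_nonneg]
  gcongr
  rcases eq_or_ne (μ s).toReal 0 with h0 | h0
  · simp [h0]
  rw [ENNReal.ofReal_div_of_pos (lt_of_le_of_ne ENNReal.toReal_nonneg h0.symm),
    ENNReal.ofReal_toReal (ENNReal.toReal_ne_zero.mp h0).2, ← Real.enorm_eq_ofReal_abs,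
    setLAverage_eq]
  gcongr
  exact enorm_integral_le_lintegral_enorm _

theorem stmt9_general {d : ℕ} (μ : Measure (Rd d)) [IsLocallyFiniteMeasure μ]
    (a : ℤ × (Fin d → ℤ) → ℝ≥0∞) (C : ℝ≥0∞)
    (hCarl : ∀ q : ℤ × (Fin d → ℤ),
      ∑' p : {p : ℤ × (Fin d → ℤ) // dyC p.1 p.2 ⊆ dyC q.1 q.2}, a p
        ≤ C * μ (dyC q.1 q.2))
    (φ : Rd d → ℝ) (hφ : MemLp φ 2 μ) :
    ∑' p : ℤ × (Fin d → ℤ),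
        ENNReal.ofReal (((∫ x in dyC p.1 p.2, φ x ∂μ) / (μ (dyC p.1 p.2)).toReal) ^ 2) * a p
      ≤ 4 * C * eLpNorm φ 2 μ ^ 2 := by
  have hφQ (p : ℤ × (Fin d → ℤ)) : ∫⁻ x in dyC p.1 p.2, ‖φ x‖ₑ ∂μ ≠ ∞ :=
    (((hφ.locallyIntegrable one_le_two).integrableOn_isCompact
      (isBounded_dyC p.1 p.2).isCompact_closure).mono_set subset_closure).2.ne
  have hL2 : ∫⁻ x, ‖φ x‖ₑ ^ 2 ∂μ = eLpNorm φ 2 μ ^ 2 := by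
    simpa only [ENNReal.coe_ofNat, NNReal.coe_ofNat, ENNReal.rpow_two] using
      (eLpNorm_nnreal_pow_eq_lintegral (f := φ) (μ := μ) (p := 2) two_ne_zero).symm
  rw [ENNReal.tsum_eq_iSup_sum, ← hL2]
  refine iSup_le fun F => ?_
  calc _ ≤ ∑ p ∈ F, (⨍⁻ x in dyC p.1 p.2, ‖φ x‖ₑ ∂μ) ^ 2 * a p := by
        gcongr with p
        exact ofReal_sq_setIntegral_div_le_sq_setLAverage φ _
    _ ≤ 4 * C * ∫⁻ x, ‖φ x‖ₑ ^ 2 ∂μ :=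
        laminar_dyC.sum_sq_setLAverage_mul_le (fun p => measurableSet_dyC p.1 p.2)
          (fun p => (isBounded_dyC p.1 p.2).measure_lt_top.ne) hCarl hφ.1.enorm hφQ F

/-- Carleson embedding theorem: if `{a_I}` (indexed by dyadic cubes) satisfies the Carleson
condition `∑_{I' ⊆ I} a_{I'} ≤ C μ(I)` for all dyadic `I`, then for every `φ ∈ L²(μ)`,
`∑_I |⟨φ⟩_{μ,I}|² a_I ≤ 4 C ‖φ‖_{L²(μ)}²`. Averages over cubes with `μ(I) = 0`
(or `μ(I) = ∞`) are interpreted as `0`. -/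
theorem stmt9 {d : ℕ} (hd : 0 < d) (μ : Measure (Rd d)) [IsLocallyFiniteMeasure μ]
    (a : ℤ × (Fin d → ℤ) → ℝ≥0∞) (C : ℝ≥0∞)
    (hCarl : ∀ q : ℤ × (Fin d → ℤ),
      ∑' p : {p : ℤ × (Fin d → ℤ) // dyC p.1 p.2 ⊆ dyC q.1 q.2}, a p
        ≤ C * μ (dyC q.1 q.2))
    (φ : Rd d → ℝ) (hφ : MemLp φ 2 μ) :
    ∑' p : ℤ × (Fin d → ℤ),
        ENNReal.ofReal (((∫ x in dyC p.1 p.2, φ x ∂μ) / (μ (dyC p.1 p.2)).toReal) ^ 2) * a p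
      ≤ 4 * C * eLpNorm φ 2 μ ^ 2 :=
  stmt9_general μ a C hCarl φ hφ
end
end
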